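/- Let V ∈ O_{n,r} with coherence μ (i.e. ‖V‖_{2→∞} ≤ μ√(r/n)) and let Q ∈ O_{n,r}. Then for any orthogonal Z ∈ O_r, ‖Q − VZ‖_{2→∞} ≤ μ√(r/n) ‖Q − VZ‖₂ + ‖V_⊥ V_⊥^T Q‖_{2→∞}, where V_⊥ spans the orthogonal complement of span(V). -/
import Mathlib


open Matrix BigOperators

/-- ℓ2 norm of the i-th row of a matrix. -/
noncomputable def row2 {m n : ℕ} (A : Matrix (Fin m) (Fin n) ℝ) (i : Fin m) : ℝ :=
  Real.sqrt (∑ j, (A i j) ^ 2)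

/-- The ℓ2→∞ norm: maximum row ℓ2 norm. -/
noncomputable def norm2inf {m n : ℕ} (A : Matrix (Fin m) (Fin n) ℝ) : ℝ :=
  ⨆ i, row2 A i

/-- The ℓ∞→ℓ∞ operator norm: maximum row ℓ1 norm. -/
noncomputable def normInfOp {m n : ℕ} (A : Matrix (Fin m) (Fin n) ℝ) : ℝ :=
  ⨆ i, ∑ j, |A i j|

/-- The spectral (ℓ2 operator) norm: sup over unit vectors of ‖Ax‖₂. -/
noncomputable def specNorm {m n : ℕ} (A : Matrix (Fin m) (Fin n) ℝ) : ℝ :=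
  ⨆ x : {x : Fin n → ℝ // ∑ j, (x j) ^ 2 = 1}, Real.sqrt (∑ i, (A.mulVec x.1 i) ^ 2)

/-- The Frobenius norm. -/
noncomputable def frobNorm {m n : ℕ} (A : Matrix (Fin m) (Fin n) ℝ) : ℝ :=
  Real.sqrt (∑ i, ∑ j, (A i j) ^ 2)

/-- The smallest singular value: inf over unit vectors of ‖Mx‖₂. -/
noncomputable def sigmaMin {r : ℕ} (M : Matrix (Fin r) (Fin r) ℝ) : ℝ :=
  ⨅ x : {x : Fin r → ℝ // ∑ j, (x j) ^ 2 = 1}, Real.sqrt (∑ i, (M.mulVec x.1 i) ^ 2)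

/-- The ℓ2→∞ subspace distance: inf over orthogonal Z of ‖Q - V Z‖_{2→∞}. -/
noncomputable def dist2inf {n r : ℕ} (Q V : Matrix (Fin n) (Fin r) ℝ) : ℝ :=
  ⨅ Z : {Z : Matrix (Fin r) (Fin r) ℝ // Zᵀ * Z = 1}, norm2inf (Q - V * Z.1)

noncomputable def en {k : ℕ} (x : Fin k → ℝ) : ℝ := Real.sqrt (∑ j, (x j) ^ 2)

lemma en_nonneg {k : ℕ} (x : Fin k → ℝ) : 0 ≤ en x := Real.sqrt_nonneg _

lemma sum_sq_nonneg {k : ℕ} (x : Fin k → ℝ) : 0 ≤ ∑ j, (x j) ^ 2 :=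
  Finset.sum_nonneg fun j _ => sq_nonneg _

lemma en_sq {k : ℕ} (x : Fin k → ℝ) : (en x) ^ 2 = ∑ j, (x j) ^ 2 :=
  Real.sq_sqrt (sum_sq_nonneg x)

lemma cs {k : ℕ} (x y : Fin k → ℝ) : ∑ j, x j * y j ≤ en x * en y := by
  have h := Finset.sum_mul_sq_le_sq_mul_sq Finset.univ x y
  calc ∑ j, x j * y j ≤ |∑ j, x j * y j| := le_abs_self _
    _ = Real.sqrt ((∑ j, x j * y j) ^ 2) := (Real.sqrt_sq_eq_abs _).symm
    _ ≤ Real.sqrt ((∑ j, (x j) ^ 2) * (∑ j, (y j) ^ 2)) := Real.sqrt_le_sqrt h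
    _ = en x * en y := Real.sqrt_mul (sum_sq_nonneg x) _

lemma en_add_le {k : ℕ} (x y : Fin k → ℝ) : en (x + y) ≤ en x + en y := by
  have hxy := cs x y
  have hx := en_sq x
  have hy := en_sq y
  have hexp : ∑ j, ((x + y) j) ^ 2 = (∑ j, (x j)^2) + 2 * (∑ j, x j * y j) + ∑ j, (y j)^2 := by
    simp only [Pi.add_apply, add_sq]
    rw [Finset.sum_add_distrib, Finset.sum_add_distrib, Finset.mul_sum]
    ring_nf
  have hle : ∑ j, ((x + y) j) ^ 2 ≤ (en x + en y) ^ 2 := by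
    rw [hexp]; nlinarith [en_nonneg x, en_nonneg y]
  calc en (x + y) ≤ Real.sqrt ((en x + en y) ^ 2) := Real.sqrt_le_sqrt hle
    _ = en x + en y := Real.sqrt_sq (add_nonneg (en_nonneg x) (en_nonneg y))

lemma specNorm_nonneg {m n : ℕ} (A : Matrix (Fin m) (Fin n) ℝ) : 0 ≤ specNorm A :=
  Real.iSup_nonneg fun _ => Real.sqrt_nonneg _

lemma norm2inf_nonneg {m n : ℕ} (A : Matrix (Fin m) (Fin n) ℝ) : 0 ≤ norm2inf A :=
  Real.iSup_nonneg fun _ => Real.sqrt_nonneg _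

lemma spec_bdd {m n : ℕ} (A : Matrix (Fin m) (Fin n) ℝ) :
    BddAbove (Set.range fun x : {x : Fin n → ℝ // ∑ j, (x j) ^ 2 = 1} =>
      Real.sqrt (∑ i, (A.mulVec x.1 i) ^ 2)) := by
  refine ⟨Real.sqrt (∑ i, ∑ j, (A i j) ^ 2), ?_⟩
  rintro _ ⟨x, rfl⟩
  apply Real.sqrt_le_sqrt
  apply Finset.sum_le_sum
  intro i _
  calc (A.mulVec x.1 i) ^ 2 = (∑ j, A i j * x.1 j) ^ 2 := rfl
    _ ≤ (∑ j, (A i j) ^ 2) * (∑ j, (x.1 j) ^ 2) := Finset.sum_mul_sq_le_sq_mul_sq _ _ _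
    _ = ∑ j, (A i j) ^ 2 := by rw [x.2, mul_one]

lemma en_mulVec_le {m n : ℕ} (A : Matrix (Fin m) (Fin n) ℝ) (y : Fin n → ℝ) :
    en (A.mulVec y) ≤ specNorm A * en y := by
  by_cases hs : ∑ j, (y j) ^ 2 = 0
  · have hy : y = 0 := by
      funext j
      have := (Finset.sum_eq_zero_iff_of_nonneg (fun j _ => sq_nonneg (y j))).1 hs j (Finset.mem_univ j)
      exact pow_eq_zero_iff (by norm_num) |>.1 this
    simp [hy, en, Matrix.mulVec_zero]
  · have hpos : 0 < ∑ j, (y j) ^ 2 := lt_of_le_of_ne (sum_sq_nonneg y) (Ne.symm hs)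
    set c := Real.sqrt (∑ j, (y j) ^ 2) with hc
    have hcpos : 0 < c := Real.sqrt_pos.2 hpos
    set x : Fin n → ℝ := c⁻¹ • y with hxdef
    have hx : ∑ j, (x j) ^ 2 = 1 := by
      simp only [hxdef, Pi.smul_apply, smul_eq_mul, mul_pow]
      rw [← Finset.mul_sum]
      rw [inv_pow, Real.sq_sqrt hpos.le]
      field_simp
    have hyx : y = c • x := by
      rw [hxdef, smul_smul, mul_inv_cancel₀ hcpos.ne', one_smul]
    have hmv : A.mulVec y = c • A.mulVec x := by rw [hyx, Matrix.mulVec_smul]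
    have hen_smul : ∀ (d : ℝ) (v : Fin m → ℝ), 0 ≤ d → en (d • v) = d * en v := by
      intro d v hd
      simp only [en, Pi.smul_apply, smul_eq_mul, mul_pow]
      rw [← Finset.mul_sum, Real.sqrt_mul (sq_nonneg d), Real.sqrt_sq hd]
    have h1 : en (A.mulVec x) ≤ specNorm A := le_ciSup (spec_bdd A) ⟨x, hx⟩
    have heny : en y = c := rfl
    rw [hmv, hen_smul c _ hcpos.le, heny]
    calc c * en (A.mulVec x) ≤ c * specNorm A := by
          exact mul_le_mul_of_nonneg_left h1 hcpos.le
      _ = specNorm A * c := mul_comm _ _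

lemma en_transpose_mulVec_le {m n : ℕ} (A : Matrix (Fin m) (Fin n) ℝ) (y : Fin m → ℝ) :
    en (Aᵀ.mulVec y) ≤ specNorm A * en y := by
  set u := Aᵀ.mulVec y with hu
  have key : (en u) ^ 2 ≤ specNorm A * en u * en y := by
    have h1 : (en u) ^ 2 = ∑ i, u i * (Aᵀ.mulVec y) i := by
      rw [en_sq]; exact Finset.sum_congr rfl fun i _ => sq (u i) ▸ (by ring)
    have h2 : ∑ i, u i * (Aᵀ.mulVec y) i = (A.mulVec u) ⬝ᵥ y := by
      have : u ⬝ᵥ (Aᵀ.mulVec y) = (u ᵥ* Aᵀ) ⬝ᵥ y := Matrix.dotProduct_mulVec u Aᵀ y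
      rw [Matrix.vecMul_transpose] at this
      exact this
    have h3 : (A.mulVec u) ⬝ᵥ y ≤ en (A.mulVec u) * en y := cs _ _
    have h4 : en (A.mulVec u) ≤ specNorm A * en u := en_mulVec_le A u
    calc (en u) ^ 2 = (A.mulVec u) ⬝ᵥ y := by rw [h1, h2]
      _ ≤ en (A.mulVec u) * en y := h3
      _ ≤ specNorm A * en u * en y :=
          mul_le_mul_of_nonneg_right h4 (en_nonneg y)
  by_cases hzero : en u = 0
  · rw [hzero]; exact mul_nonneg (specNorm_nonneg A) (en_nonneg y)
  · have hupos : 0 < en u := lt_of_le_of_ne (en_nonneg u) (Ne.symm hzero)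
    nlinarith [key]

lemma en_isometry {n r : ℕ} (V : Matrix (Fin n) (Fin r) ℝ) (hV : Vᵀ * V = 1)
    (x : Fin r → ℝ) : en (V.mulVec x) = en x := by
  unfold en
  congr 1
  have h1 : ∑ i, (V.mulVec x i) ^ 2 = (V.mulVec x) ⬝ᵥ (V.mulVec x) :=
    Finset.sum_congr rfl fun i _ => sq (V.mulVec x i)
  have h2 : (V.mulVec x) ⬝ᵥ (V.mulVec x) = ((V.mulVec x) ᵥ* V) ⬝ᵥ x :=
    Matrix.dotProduct_mulVec _ V x
  have h3 : (V.mulVec x) ᵥ* V = Vᵀ.mulVec (V.mulVec x) := (Matrix.mulVec_transpose V _).symm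
  have h4 : Vᵀ.mulVec (V.mulVec x) = x := by
    rw [Matrix.mulVec_mulVec, hV, Matrix.one_mulVec]
  have h5 : x ⬝ᵥ x = ∑ j, (x j) ^ 2 :=
    Finset.sum_congr rfl fun j _ => (sq (x j)).symm
  rw [h1, h2, h3, h4, h5]

/-- ‖Q − VZ‖_{2→∞} ≤ μ√(r/n) ‖Q − VZ‖₂ + ‖V_⊥ V_⊥ᵀ Q‖_{2→∞}. -/
theorem two_to_inf_split_bound {n r : ℕ}
    (V Q : Matrix (Fin n) (Fin r) ℝ) (Vp : Matrix (Fin n) (Fin (n - r)) ℝ)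
    (Z : Matrix (Fin r) (Fin r) ℝ) (μ : ℝ)
    (hV : Vᵀ * V = 1) (hQ : Qᵀ * Q = 1)
    (hcomplete : V * Vᵀ + Vp * Vpᵀ = 1)
    (hcoh : norm2inf V ≤ μ * Real.sqrt ((r : ℝ) / n))
    (hZ : Zᵀ * Z = 1) :
    norm2inf (Q - V * Z)
      ≤ μ * Real.sqrt ((r : ℝ) / n) * specNorm (Q - V * Z)
        + norm2inf (Vp * Vpᵀ * Q) := by
  set A := Q - V * Z with hA
  have hmu : 0 ≤ μ * Real.sqrt ((r : ℝ) / n) := le_trans (norm2inf_nonneg V) hcoh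
  have hRHS : 0 ≤ μ * Real.sqrt ((r : ℝ) / n) * specNorm A + norm2inf (Vp * Vpᵀ * Q) :=
    add_nonneg (mul_nonneg hmu (specNorm_nonneg A)) (norm2inf_nonneg _)
  have hP : Vp * Vpᵀ = 1 - V * Vᵀ := eq_sub_of_add_eq' hcomplete
  have hVVV : V * Vᵀ * (V * Z) = V * Z := by
    rw [← Matrix.mul_assoc, Matrix.mul_assoc V Vᵀ V, hV, Matrix.mul_one]
  have key : A = V * Vᵀ * A + Vp * Vpᵀ * Q := by
    rw [hP, hA, Matrix.mul_sub, hVVV, Matrix.sub_mul, Matrix.one_mul]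
    abel
  apply Real.iSup_le _ hRHS
  intro i
  have hsplit : row2 A i ≤ en ((V * Vᵀ * A) i) + en ((Vp * Vpᵀ * Q) i) := by
    have : row2 A i = en ((V * Vᵀ * A + Vp * Vpᵀ * Q) i) := by rw [← key]; rfl
    rw [this]
    exact en_add_le _ _
  have hrow1 : (V * Vᵀ * A) i = Aᵀ.mulVec (fun k => (V * Vᵀ) i k) := by
    funext j
    simp only [Matrix.mul_apply, Matrix.mulVec, dotProduct, Matrix.transpose_apply]
    exact Finset.sum_congr rfl fun k _ => mul_comm _ _
  have hrowP : (fun k => (V * Vᵀ) i k) = V.mulVec (V i) := by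
    funext k
    simp only [Matrix.mul_apply, Matrix.mulVec, dotProduct, Matrix.transpose_apply]
    exact Finset.sum_congr rfl fun l _ => mul_comm _ _
  have hb1 : en ((V * Vᵀ * A) i) ≤ μ * Real.sqrt ((r : ℝ) / n) * specNorm A := by
    rw [hrow1]
    calc en (Aᵀ.mulVec (fun k => (V * Vᵀ) i k))
        ≤ specNorm A * en (fun k => (V * Vᵀ) i k) := en_transpose_mulVec_le A _
      _ = specNorm A * en (V i) := by rw [hrowP, en_isometry V hV]
      _ ≤ specNorm A * (μ * Real.sqrt ((r : ℝ) / n)) := by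
          apply mul_le_mul_of_nonneg_left _ (specNorm_nonneg A)
          calc en (V i) = row2 V i := rfl
            _ ≤ norm2inf V := le_ciSup (Set.Finite.bddAbove (Set.finite_range _)) i
            _ ≤ μ * Real.sqrt ((r : ℝ) / n) := hcoh
      _ = μ * Real.sqrt ((r : ℝ) / n) * specNorm A := mul_comm _ _
  have hb2 : en ((Vp * Vpᵀ * Q) i) ≤ norm2inf (Vp * Vpᵀ * Q) := by
    show row2 (Vp * Vpᵀ * Q) i ≤ norm2inf (Vp * Vpᵀ * Q)
    exact le_ciSup (Set.Finite.bddAbove (Set.finite_range _)) i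
  calc row2 A i ≤ en ((V * Vᵀ * A) i) + en ((Vp * Vpᵀ * Q) i) := hsplit
    _ ≤ μ * Real.sqrt ((r : ℝ) / n) * specNorm A + norm2inf (Vp * Vpᵀ * Q) :=
        add_le_add hb1 hb2
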